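/- For all Laurent polynomials u, f, g in ℂ[z, z^{−1}], the q-integration-by-parts identity −q·res(u·(τf)·(∂_q g)) = res(g·τ^{−1}(∂_q((τu)·(τ²f)))) holds. -/

import Mathlib

/-- The q-integer `[m] = (q^m - q^(-m))/(q - q⁻¹)`. -/
noncomputable def qInt (q : ℂ) (m : ℤ) : ℂ := (q ^ m - q ^ (-m)) / (q - q⁻¹)

/-- The q-derivative `∂_q` on `ℂ[z,z⁻¹]`: `∂_q z^k = [k]·z^{k−1}`. -/
noncomputable def dq (q : ℂ) : LaurentPolynomial ℂ →ₗ[ℂ] LaurentPolynomial ℂ :=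
  (Finsupp.lsum ℂ fun k : ℤ => qInt q k • AddMonoidAlgebra.lsingle (k - 1)) ∘ₗ
    (AddMonoidAlgebra.coeffLinearEquiv ℂ).toLinearMap

/-- The operator `τ` on `ℂ[z,z⁻¹]`: `τ z^k = q^k·z^k`. -/
noncomputable def tau (q : ℂ) : LaurentPolynomial ℂ →ₗ[ℂ] LaurentPolynomial ℂ :=
  (Finsupp.lsum ℂ fun k : ℤ => q ^ k • AddMonoidAlgebra.lsingle k) ∘ₗ
    (AddMonoidAlgebra.coeffLinearEquiv ℂ).toLinearMap

/-- `τ⁻¹` on `ℂ[z,z⁻¹]`: `τ⁻¹ z^k = q^{−k}·z^k`. -/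
noncomputable def tauInv (q : ℂ) : LaurentPolynomial ℂ →ₗ[ℂ] LaurentPolynomial ℂ :=
  (Finsupp.lsum ℂ fun k : ℤ => q ^ (-k) • AddMonoidAlgebra.lsingle k) ∘ₗ
    (AddMonoidAlgebra.coeffLinearEquiv ℂ).toLinearMap

/-- `res(f)` is the coefficient of `z^{−1}` in `f`. -/
noncomputable def res (f : LaurentPolynomial ℂ) : ℂ := f.coeff (-1)

/-
Since `τ` is multiplicative, `(τu)·(τ²f) = τ(u·τf)`, so with `h = u·τf` the identity becomes
`−q·res(h·∂_q g) = res(g·τ⁻¹∂_q(τh))`. Both sides are bilinear in `h` and `g`, and on monomials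
`h = z^a`, `g = z^{−a}` it reduces to `[−a] = −[a]`.
-/

open AddMonoidAlgebra

section Monomials

variable (q : ℂ) (k : ℤ) (c : ℂ)

lemma dq_single : dq q (single k c) = single (k - 1) (qInt q k * c) := by
  rw [dq, LinearMap.comp_apply, LinearEquiv.coe_coe, coeffLinearEquiv_apply, coeff_single,
    Finsupp.lsum_single, LinearMap.smul_apply, lsingle_apply, smul_single']

lemma tau_single : tau q (single k c) = single k (q ^ k * c) := by
  rw [tau, LinearMap.comp_apply, LinearEquiv.coe_coe, coeffLinearEquiv_apply, coeff_single,
    Finsupp.lsum_single, LinearMap.smul_apply, lsingle_apply, smul_single']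

lemma tauInv_single : tauInv q (single k c) = single k (q ^ (-k) * c) := by
  rw [tauInv, LinearMap.comp_apply, LinearEquiv.coe_coe, coeffLinearEquiv_apply, coeff_single,
    Finsupp.lsum_single, LinearMap.smul_apply, lsingle_apply, smul_single']

lemma res_single : res (single k c : LaurentPolynomial ℂ) = if k = -1 then c else 0 := by
  rw [res, coeff_single]
  exact Finsupp.single_apply

end Monomials

lemma res_add (a b : LaurentPolynomial ℂ) : res (a + b) = res a + res b := rfl

lemma qInt_neg (q : ℂ) (n : ℤ) : qInt q (-n) = -qInt q n := by
  rw [qInt, qInt, neg_neg, ← neg_div, neg_sub]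

lemma tau_mul {q : ℂ} (hq : q ≠ 0) (a b : LaurentPolynomial ℂ) :
    tau q (a * b) = tau q a * tau q b := by
  induction a using induction_linear with
  | zero => simp
  | add a₁ a₂ h₁ h₂ => simp only [add_mul, map_add, h₁, h₂]
  | single i c =>
    induction b using induction_linear with
    | zero => simp
    | add b₁ b₂ h₁ h₂ => simp only [mul_add, map_add, h₁, h₂]
    | single j d =>
      simp only [single_mul_single, tau_single, zpow_add₀ hq]
      ring_nf

lemma neg_mul_res_mul_dq {q : ℂ} (hq : q ≠ 0) (h g : LaurentPolynomial ℂ) :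
    -q * res (h * dq q g) = res (g * tauInv q (dq q (tau q h))) := by
  induction h using induction_linear with
  | zero => simp [res]
  | add h₁ h₂ ih₁ ih₂ => simp only [add_mul, mul_add, map_add, res_add, ih₁, ih₂]
  | single a c =>
    induction g using induction_linear with
    | zero => simp [res]
    | add g₁ g₂ ih₁ ih₂ => simp only [add_mul, mul_add, map_add, res_add, ih₁, ih₂]
    | single n d =>
      simp only [tau_single, dq_single, tauInv_single, single_mul_single, res_single]
      by_cases hsum : a + n = 0
      · obtain rfl : n = -a := by omega
        rw [if_pos (by omega), if_pos (by omega), qInt_neg, neg_sub, zpow_sub₀ hq, zpow_one]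
        field_simp [zpow_ne_zero a hq]
      · rw [if_neg (by omega), if_neg (by omega), mul_zero]

theorem q_integration_by_parts_general (q : ℂ) (hq : q ≠ 0)
    (u f g : LaurentPolynomial ℂ) :
    -q * res (u * tau q f * dq q g)
      = res (g * tauInv q (dq q (tau q u * tau q (tau q f)))) := by
  rw [← tau_mul hq]
  exact neg_mul_res_mul_dq hq (u * tau q f) g

/-- q-integration by parts:
`−q·res(u·(τf)·(∂_q g)) = res(g·τ⁻¹(∂_q((τu)·(τ²f))))`. -/
theorem q_integration_by_parts (q : ℂ) (hq : q ≠ 0) (hq2 : q ^ 2 ≠ 1)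
    (u f g : LaurentPolynomial ℂ) :
    -q * res (u * tau q f * dq q g)
      = res (g * tauInv q (dq q (tau q u * tau q (tau q f)))) :=
  q_integration_by_parts_general q hq u f g
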